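/- Suppose a compact invariant set Γ for a continuous ℝⁿ-action is a finite union of orbits, at least one of which is non-compact (of the form ℝᵏ × T^m with k ≥ 1). Then any invariant probability measure supported on Γ gives zero mass to each non-compact orbit; consequently Γ must contain at least one compact orbit (a torus T^m with m ≤ n). -/

import Mathlib

/-!
Pulled back along the equivariant embedding `e : ℝᵏ × Tᵐ → X` of an orbit, an invariant
probability measure becomes a finite translation-invariant measure on a noncompact locally compact
group; by uniqueness of Haar measure it is a multiple of a Haar measure, which has infinite mass,
so it vanishes.

For the compact orbit, take an orbit whose closure `M` is minimal among the finitely many orbit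
closures, so that every orbit in `M` is dense in `M`. The compact set `M` is covered by the
countably many compact pieces `K +ᵥ x i` (`K` compact in `ℝⁿ`), so by Baire one orbit
contains a relatively open subset of `M`. Every orbit of `M` meets that subset, hence `M` is a
single orbit.
-/

open MeasureTheory AddAction Set

namespace MeasureTheory

variable {G Y X : Type*}

theorem Measure.eq_zero_of_isAddLeftInvariant_of_noncompactSpace [TopologicalSpace G]
    [AddGroup G] [IsTopologicalAddGroup G] [LocallyCompactSpace G]
    [SecondCountableTopology G] [NoncompactSpace G] [MeasurableSpace G] [BorelSpace G]
    (μ : Measure G) [IsFiniteMeasure μ] [μ.IsAddLeftInvariant] : μ = 0 := by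
  have hμ := isAddLeftInvariant_eq_smul μ addHaar
  suffices hc : μ.addHaarScalarFactor addHaar = 0 by rw [hμ, hc, zero_smul]
  by_contra hc
  have hμ_univ := congrArg (· univ) hμ
  simp only [smul_apply, measure_univ_of_isAddLeftInvariant, ENNReal.smul_top, hc] at hμ_univ
  exact measure_ne_top μ univ hμ_univ

theorem Measure.isAddLeftInvariant_comap_of_equivariant [AddGroup G] [AddGroup Y]
    [MeasurableSpace Y] [MeasurableAdd Y] [MeasurableSpace X] [AddAction G X] (μ : Measure X)
    [VAddInvariantMeasure G X μ] {π : G →+ Y} (hπ : Function.Surjective π) {e : Y → X}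
    (he : MeasurableEmbedding e) (hequiv : ∀ g v, g +ᵥ e v = e (π g + v)) :
    (μ.comap e).IsAddLeftInvariant := by
  refine ⟨fun w => ?_⟩
  obtain ⟨g, rfl⟩ := hπ w
  ext s hs
  have himage : e '' ((π g + ·) ⁻¹' s) = (g +ᵥ ·) ⁻¹' (e '' s) := by
    ext a
    constructor
    · rintro ⟨v, hv, rfl⟩
      exact ⟨π g + v, hv, (hequiv g v).symm⟩
    · rintro ⟨u, hu, hua⟩
      refine ⟨π (-g) + u, by simpa [← add_assoc] using hu, ?_⟩
      rw [← hequiv, hua, neg_vadd_vadd]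
  rw [map_apply (measurable_const_add _) hs, he.comap_apply, he.comap_apply, himage,
    VAddInvariantMeasure.measure_preimage_vadd _ (he.measurableSet_image.2 hs)]

theorem measure_range_eq_zero_of_equivariant [AddGroup G] [AddGroup Y] [TopologicalSpace Y]
    [IsTopologicalAddGroup Y] [LocallyCompactSpace Y] [SecondCountableTopology Y]
    [NoncompactSpace Y] [MeasurableSpace Y] [BorelSpace Y] [MeasurableSpace X] [AddAction G X]
    (μ : Measure X) [IsFiniteMeasure μ] [VAddInvariantMeasure G X μ] {π : G →+ Y}
    (hπ : Function.Surjective π) {e : Y → X} (he : MeasurableEmbedding e)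
    (hequiv : ∀ g v, g +ᵥ e v = e (π g + v)) :
    μ (range e) = 0 := by
  have := Measure.isAddLeftInvariant_comap_of_equivariant μ hπ he hequiv
  rw [← image_univ, ← he.comap_apply,
    Measure.eq_zero_of_isAddLeftInvariant_of_noncompactSpace (μ.comap e)]
  rfl

end MeasureTheory

section

variable {G X : Type*} [AddGroup G] [TopologicalSpace X] [AddAction G X]

theorem exists_closure_orbit_eq_of_mem_closure_orbit [ContinuousConstVAdd G X] {ι : Type*}
    [Finite ι] [Nonempty ι] (x : ι → X) (hΓ : IsClosed (⋃ i, orbit G (x i))) :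
    ∃ i, ∀ y ∈ closure (orbit G (x i)), closure (orbit G y) = closure (orbit G (x i)) := by
  -- an orbit closure that is minimal among the finitely many orbit closures is a minimal set
  obtain ⟨_, hmin⟩ :=
    (finite_range fun i => closure (orbit G (x i))).exists_minimal (range_nonempty _)
  obtain ⟨i, rfl⟩ := hmin.prop
  refine ⟨i, fun y hy => hmin.eq_of_subset ?_ ?_⟩
  · obtain ⟨j, hj⟩ :=
      mem_iUnion.1 (closure_minimal (subset_iUnion (fun i => orbit G (x i)) i) hΓ hy)
    exact ⟨j, by rw [orbit_eq_iff.2 hj]⟩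
  · refine closure_minimal ?_ isClosed_closure
    rintro _ ⟨g, rfl⟩
    exact vadd_closure_orbit_subset g (x i) (vadd_mem_vadd_set hy)

theorem IsCompact.exists_isOpen_inter_subset_orbit [TopologicalSpace G] [SigmaCompactSpace G]
    [ContinuousVAdd G X] [T2Space X] {M : Set X} (hM : IsCompact M) (hne : M.Nonempty)
    {ι : Type*} [Countable ι] {x : ι → X} (hcover : M ⊆ ⋃ i, orbit G (x i)) :
    ∃ i, ∃ U, IsOpen U ∧ (U ∩ M).Nonempty ∧ U ∩ M ⊆ orbit G (x i) := by
  have : CompactSpace M := isCompact_iff_compactSpace.1 hM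
  have : Nonempty M := hne.to_subtype
  set K : ι × ℕ → Set X := fun p => (· +ᵥ x p.1) '' compactCovering G p.2
  have hK : ∀ p, IsClosed (K p) := fun p =>
    ((isCompact_compactCovering G p.2).image (continuous_id.vadd continuous_const)).isClosed
  have hcov : ⋃ p, ((↑) : M → X) ⁻¹' K p = univ := by
    refine eq_univ_of_forall fun z => ?_
    obtain ⟨i, g, hg⟩ := mem_iUnion.1 (hcover z.2)
    obtain ⟨N, hN⟩ := exists_mem_compactCovering g
    exact mem_iUnion.2 ⟨(i, N), g, hN, hg⟩
  obtain ⟨p, z, hz⟩ := nonempty_interior_of_iUnion_of_closed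
    (fun p => (hK p).preimage continuous_subtype_val) hcov
  obtain ⟨U, hU, hUeq⟩ :=
    isOpen_induced_iff.1 (isOpen_interior (s := ((↑) : M → X) ⁻¹' K p))
  refine ⟨p.1, U, hU, ⟨z, ?_, z.2⟩, ?_⟩
  · rw [← hUeq] at hz
    exact hz
  · rintro a ⟨haU, haM⟩
    have ha : (⟨a, haM⟩ : M) ∈ interior (((↑) : M → X) ⁻¹' K p) := hUeq ▸ haU
    obtain ⟨g, -, hg⟩ := interior_subset ha
    exact ⟨g, hg⟩

theorem orbit_eq_of_isOpen_inter_subset_orbit {M U : Set X} {x : X}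
    (hM : ∀ y ∈ M, closure (orbit G y) = M) (hU : IsOpen U) (hUM : (U ∩ M).Nonempty)
    (hsub : U ∩ M ⊆ orbit G x) : orbit G x = M := by
  obtain ⟨z, hzU, hzM⟩ := hUM
  refine Subset.antisymm ?_ fun y hy => ?_
  · rw [← orbit_eq_iff.2 (hsub ⟨hzU, hzM⟩), ← hM z hzM]
    exact subset_closure
  · obtain ⟨_, hgU, g, rfl⟩ := mem_closure_iff.1 ((hM y hy).symm ▸ hzM) U hU hzU
    have hgM : g +ᵥ y ∈ M := hM y hy ▸ subset_closure (mem_orbit y g)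
    rw [← orbit_eq_iff, ← orbit_vadd g y]
    exact orbit_eq_iff.2 (hsub ⟨hgU, hgM⟩)

theorem exists_isCompact_orbit_of_isCompact_iUnion_orbit [TopologicalSpace G]
    [SigmaCompactSpace G] [ContinuousVAdd G X] [T2Space X] {ι : Type*} [Finite ι] [Nonempty ι]
    (x : ι → X) (hΓ : IsCompact (⋃ i, orbit G (x i))) : ∃ i, IsCompact (orbit G (x i)) := by
  obtain ⟨i, hmin⟩ := exists_closure_orbit_eq_of_mem_closure_orbit x hΓ.isClosed
  have hMΓ : closure (orbit G (x i)) ⊆ ⋃ j, orbit G (x j) :=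
    closure_minimal (subset_iUnion (fun j => orbit G (x j)) i) hΓ.isClosed
  have hM : IsCompact (closure (orbit G (x i))) := hΓ.of_isClosed_subset isClosed_closure hMΓ
  obtain ⟨j, U, hU, hUM, hsub⟩ :=
    hM.exists_isOpen_inter_subset_orbit (nonempty_orbit (x i)).closure hMΓ
  exact ⟨j, orbit_eq_of_isOpen_inter_subset_orbit hmin hU hUM hsub ▸ hM⟩

end

theorem invariant_measure_vanishes_on_noncompact_orbits_general
    {X : Type*} [TopologicalSpace X] [T2Space X]
    [MeasurableSpace X] [BorelSpace X]
    (n p : ℕ) (hp : 0 < p)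
    (Φ : (Fin n → ℝ) → X → X)
    (hcont : Continuous fun q : (Fin n → ℝ) × X => Φ q.1 q.2)
    (hzero : ∀ x, Φ 0 x = x)
    (hadd : ∀ s t x, Φ (s + t) x = Φ s (Φ t x))
    (x : Fin p → X)
    (hΓcomp : IsCompact (⋃ i, Set.range fun t => Φ t (x i)))
    -- each orbit is, equivariantly and homeomorphically, of the form `ℝᵏ × Tᵐ`:
    (hstruct : ∀ i, ∃ (k m : ℕ)
        (π : (Fin n → ℝ) →+ (Fin k → ℝ) × (Fin m → AddCircle (1 : ℝ)))
        (e : (Fin k → ℝ) × (Fin m → AddCircle (1 : ℝ)) → X),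
        Function.Surjective π ∧
        Topology.IsEmbedding e ∧
        Set.range e = (Set.range fun t => Φ t (x i)) ∧
        e 0 = x i ∧
        (∀ t v, Φ t (e v) = e (π t + v)) ∧
        (¬ IsCompact (Set.range fun t => Φ t (x i)) → 1 ≤ k)) :
    (∀ μ : Measure X, IsProbabilityMeasure μ → (∀ t, μ.map (Φ t) = μ) →
        μ (⋃ i, Set.range fun t => Φ t (x i))ᶜ = 0 →
        ∀ i, ¬ IsCompact (Set.range fun t => Φ t (x i)) →
          μ (Set.range fun t => Φ t (x i)) = 0) ∧
    (∃ i, IsCompact (Set.range fun t => Φ t (x i))) := by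
  -- with this action, `orbit _ y` is by definition `Set.range fun t => Φ t y`
  let : AddAction (Fin n → ℝ) X := { vadd := Φ, zero_vadd := hzero, add_vadd := hadd }
  have : ContinuousVAdd (Fin n → ℝ) X := ⟨hcont⟩
  refine ⟨fun μ _ hinv _ i hi => ?_, ?_⟩
  · obtain ⟨k, m, π, e, hπ, he, hrange, -, hequiv, hk⟩ := hstruct i
    have : Nonempty (Fin k) := ⟨⟨0, hk hi⟩⟩
    have : VAddInvariantMeasure (Fin n → ℝ) X μ := ⟨fun t s hs =>
      (Measure.map_apply (continuous_const_vadd t).measurable hs).symm.trans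
        (congrArg (· s) (hinv t))⟩
    rw [← hrange]
    exact measure_range_eq_zero_of_equivariant μ hπ
      (he.continuous.measurableEmbedding he.injective) hequiv
  · have : Nonempty (Fin p) := ⟨⟨0, hp⟩⟩
    exact exists_isCompact_orbit_of_isCompact_iUnion_orbit x hΓcomp

/-- Let `Γ = ⋃ i, ℝⁿ·(x i)` be a compact invariant set for a continuous
`ℝⁿ`-action `Φ`, a finite union of orbits, each of which is (equivariantly) of the form
`ℝᵏ × Tᵐ`; assume at least one orbit is non-compact (so `k ≥ 1` for it).  Then any invariant
Borel probability measure supported in `Γ` gives zero mass to each non-compact orbit, and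
consequently `Γ` contains at least one compact orbit. -/
theorem invariant_measure_vanishes_on_noncompact_orbits
    {X : Type*} [TopologicalSpace X] [T2Space X] [TopologicalSpace.MetrizableSpace X]
    [MeasurableSpace X] [BorelSpace X]
    (n p : ℕ) (hp : 0 < p)
    (Φ : (Fin n → ℝ) → X → X)
    (hcont : Continuous fun q : (Fin n → ℝ) × X => Φ q.1 q.2)
    (hzero : ∀ x, Φ 0 x = x)
    (hadd : ∀ s t x, Φ (s + t) x = Φ s (Φ t x))
    (x : Fin p → X)
    (hΓcomp : IsCompact (⋃ i, Set.range fun t => Φ t (x i)))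
    -- each orbit is, equivariantly and homeomorphically, of the form `ℝᵏ × Tᵐ`:
    (hstruct : ∀ i, ∃ (k m : ℕ)
        (π : (Fin n → ℝ) →+ (Fin k → ℝ) × (Fin m → AddCircle (1 : ℝ)))
        (e : (Fin k → ℝ) × (Fin m → AddCircle (1 : ℝ)) → X),
        Function.Surjective π ∧
        Topology.IsEmbedding e ∧
        Set.range e = (Set.range fun t => Φ t (x i)) ∧
        e 0 = x i ∧
        (∀ t v, Φ t (e v) = e (π t + v)) ∧
        (¬ IsCompact (Set.range fun t => Φ t (x i)) → 1 ≤ k))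
    -- at least one orbit is non-compact:
    (hnc : ∃ i, ¬ IsCompact (Set.range fun t => Φ t (x i))) :
    (∀ μ : Measure X, IsProbabilityMeasure μ → (∀ t, μ.map (Φ t) = μ) →
        μ (⋃ i, Set.range fun t => Φ t (x i))ᶜ = 0 →
        ∀ i, ¬ IsCompact (Set.range fun t => Φ t (x i)) →
          μ (Set.range fun t => Φ t (x i)) = 0) ∧
    (∃ i, IsCompact (Set.range fun t => Φ t (x i))) :=
  invariant_measure_vanishes_on_noncompact_orbits_general n p hp Φ hcont hzero hadd x hΓcomp hstruct
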